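/- Let $\{X_t\}$ be a stationary ergodic real-valued process with $|X_t| \le K$ almost surely, and suppose $\hat{X}_{-t}$ are $\sigma(X^{-t})$-measurable, uniformly bounded random variables converging in probability to $\hat{X} = E\{X_0|X^-\}$. Then $|X_0 - \hat{X}_{-t}|^2 \to |X_0 - \hat{X}|^2$ in $L^1(P)$, and the on-line average squared errors satisfy $\frac{1}{n}\sum_{t=0}^{n-1}|X_t - \hat{X}_t|^2 \to E|X_0 - \hat{X}|^2$ in $L^1(P)$, where $\hat{X}_t(\omega) = \hat{X}_{-t}(T^t\omega)$ for the left shift $T$. -/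

import Mathlib

open MeasureTheory Filter Finset

namespace Stmt18

/-- The left shift on two-sided real sequences. -/
def shift (ω : ℤ → ℝ) : ℤ → ℝ := fun n => ω (n + 1)

/-- The σ-algebra of the infinite past `X^- = (…, X_{-2}, X_{-1})`. -/
def pastSA : MeasurableSpace (ℤ → ℝ) :=
  MeasurableSpace.comap (fun ω => fun i : {i : ℤ // i < 0} => ω i.val) MeasurableSpace.pi

/-- The σ-algebra generated by the `t`-past `X^{-t} = (X_{-t}, …, X_{-1})`. -/
def recentSA (t : ℕ) : MeasurableSpace (ℤ → ℝ) :=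
  MeasurableSpace.comap (fun ω => fun i : Fin t => ω (-(t : ℤ) + i)) MeasurableSpace.pi

/-- The optimal predictor `X̂ = E{X₀ | X^-}`. -/
noncomputable def Xopt (μ : Measure (ℤ → ℝ)) : (ℤ → ℝ) → ℝ :=
  μ[(fun ω => ω 0) | pastSA]

end Stmt18

open Stmt18

open Topology

/-!
For the first limit, `|(|x - a|² - |x - b|²)| ≤ (|x - a| + |x - b|) |a - b|` together with the
uniform bounds reduces the `L¹` convergence of the squared errors to that of the predictors
`X̂_{-t} → X̂`, which follows from convergence in measure by dominated convergence along
a.e. convergent subsequences.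

For the second, since the shift preserves `μ`, the on-line average differs in `L¹` from the
Birkhoff average of `|X₀ - X̂|²` by at most the Cesàro mean of the errors of the first part.
The Birkhoff average converges in `L²`, hence in `L¹`, by von Neumann's mean ergodic theorem
for the Koopman isometry; its limit is a shift-invariant function, so a constant by ergodicity,
and averaging preserves the integral, so the constant is `E|X₀ - X̂|²`.
-/

theorem abs_sq_abs_sub_sub_sq_abs_sub_le (x a b : ℝ) :
    |(|x - a| ^ 2) - (|x - b| ^ 2)| ≤ (|x - a| + |x - b|) * |a - b| := by
  rw [sq_abs, sq_abs, show (x - a) ^ 2 - (x - b) ^ 2 = ((x - a) + (x - b)) * (b - a) by ring,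
    abs_mul, abs_sub_comm b a]
  gcongr
  exact abs_add_le _ _

namespace MeasureTheory

variable {α : Type*} [MeasurableSpace α] {μ : Measure α}

theorem MeasurePreserving.integral_comp_of_aestronglyMeasurable {β E : Type*}
    [MeasurableSpace β] {ν : Measure β} [NormedAddCommGroup E] [NormedSpace ℝ E] {f : α → β}
    (hf : MeasurePreserving f μ ν) {g : β → E} (hg : AEStronglyMeasurable g ν) :
    ∫ x, g (f x) ∂μ = ∫ y, g y ∂ν := by
  rw [← integral_map hf.measurable.aemeasurable (by rwa [hf.map_eq]), hf.map_eq]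

section Birkhoff

variable {f : α → α} {g : α → ℝ}

theorem MeasurePreserving.integrable_birkhoffSum (hf : MeasurePreserving f μ μ)
    (hg : Integrable g μ) (n : ℕ) : Integrable (birkhoffSum f g n) μ :=
  integrable_finsetSum _ fun k _ => (hf.iterate k).integrable_comp_of_integrable hg

theorem MeasurePreserving.integral_birkhoffAverage (hf : MeasurePreserving f μ μ)
    (hg : Integrable g μ) {n : ℕ} (hn : n ≠ 0) :
    ∫ x, birkhoffAverage ℝ f g n x ∂μ = ∫ x, g x ∂μ := by
  have hcomp (k : ℕ) : ∫ x, g (f^[k] x) ∂μ = ∫ x, g x ∂μ :=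
    (hf.iterate k).integral_comp_of_aestronglyMeasurable hg.aestronglyMeasurable
  simp only [birkhoffAverage, birkhoffSum, smul_eq_mul]
  rw [integral_const_mul, integral_finsetSum (f := fun k x => g (f^[k] x)) _ fun k _ =>
    (hf.iterate k).integrable_comp_of_integrable hg]
  simp [hcomp, hn]

theorem Lp.coeFn_birkhoffSum_compMeasurePreserving {p : ENNReal} [Fact (1 ≤ p)]
    (hf : MeasurePreserving f μ μ) (hg : MemLp g p μ) (n : ℕ) :
    ⇑(birkhoffSum (Lp.compMeasurePreserving f hf) id n (hg.toLp g))
      =ᵐ[μ] birkhoffSum f g n := by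
  induction n with
  | zero => simpa [birkhoffSum_zero'] using Lp.coeFn_zero ℝ p μ
  | succ n ih =>
    have hiter : ⇑((Lp.compMeasurePreserving f hf)^[n] (hg.toLp g)) =ᵐ[μ] g ∘ f^[n] := by
      rw [Lp.compMeasurePreserving_iterate]
      exact (Lp.coeFn_compMeasurePreserving _ _).trans
        ((hf.iterate n).quasiMeasurePreserving.ae_eq hg.coeFn_toLp)
    filter_upwards [Lp.coeFn_add (birkhoffSum (Lp.compMeasurePreserving f hf) id n (hg.toLp g))
      ((Lp.compMeasurePreserving f hf)^[n] (hg.toLp g)), ih, hiter] with x hadd hsum hx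
    rw [birkhoffSum_succ, id_eq, hadd, Pi.add_apply, hsum, hx, Function.comp_apply,
      birkhoffSum_succ]

end Birkhoff

theorem Lp.integral_abs_le_norm_two [IsProbabilityMeasure μ] (v : Lp ℝ 2 μ) :
    ∫ x, |v x| ∂μ ≤ ‖v‖ := by
  simp_rw [← Real.norm_eq_abs]
  rw [integral_norm_eq_lintegral_enorm (Lp.aestronglyMeasurable v),
    ← eLpNorm_one_eq_lintegral_enorm, Lp.norm_def]
  exact ENNReal.toReal_mono (Lp.eLpNorm_ne_top v)
    (eLpNorm_le_eLpNorm_of_exponent_le one_le_two (Lp.aestronglyMeasurable v))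

theorem memLp_abs_sub_sq_of_abs_le [IsFiniteMeasure μ] {X u : α → ℝ} {K C : ℝ}
    (hX : AEStronglyMeasurable X μ) (hu : AEStronglyMeasurable u μ) (hXK : ∀ᵐ x ∂μ, |X x| ≤ K)
    (huC : ∀ᵐ x ∂μ, |u x| ≤ C) (p : ENNReal) : MemLp (fun x => |X x - u x| ^ 2) p μ := by
  refine .of_bound ((continuous_abs.pow 2).comp_aestronglyMeasurable (hX.sub hu)) ((K + C) ^ 2) ?_
  filter_upwards [hXK, huC] with x hx hux
  rw [Real.norm_eq_abs, abs_pow, abs_abs]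
  exact pow_le_pow_left₀ (abs_nonneg _) ((abs_sub _ _).trans (add_le_add hx hux)) 2

theorem TendstoInMeasure.tendsto_integral_abs_sub [IsFiniteMeasure μ] {u : ℕ → α → ℝ}
    {v : α → ℝ} (huv : TendstoInMeasure μ u atTop v) (hu : ∀ n, AEStronglyMeasurable (u n) μ)
    {D : ℝ} (hD : ∀ n, ∀ᵐ x ∂μ, |u n x - v x| ≤ D) :
    Tendsto (fun n => ∫ x, |u n x - v x| ∂μ) atTop (𝓝 0) := by
  have hv := huv.aestronglyMeasurable hu
  refine tendsto_of_subseq_tendsto fun ns hns => ?_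
  obtain ⟨ms, -, hms⟩ := TendstoInMeasure.exists_seq_tendsto_ae fun ε hε => (huv ε hε).comp hns
  refine ⟨ms, ?_⟩
  simpa only [integral_zero] using tendsto_integral_of_dominated_convergence
    (F := fun k x => |u (ns (ms k)) x - v x|) (f := fun _ => 0)
    (fun _ => D) (fun k => ((hu _).sub hv).norm) (integrable_const D)
    (fun k => (hD _).mono fun x hx => by rwa [Real.norm_eq_abs, abs_abs])
    (hms.mono fun x hx => by simpa using ((hx.sub_const (v x)).abs))

theorem TendstoInMeasure.tendsto_integral_abs_sq_err_sub [IsProbabilityMeasure μ]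
    {X v : α → ℝ} {u : ℕ → α → ℝ} (huv : TendstoInMeasure μ u atTop v)
    (hu : ∀ n, AEStronglyMeasurable (u n) μ) {K C : ℝ}
    (hXK : ∀ᵐ x ∂μ, |X x| ≤ K) (huC : ∀ n, ∀ᵐ x ∂μ, |u n x| ≤ C) (hvK : ∀ᵐ x ∂μ, |v x| ≤ K) :
    Tendsto (fun n => ∫ x, |(|X x - u n x| ^ 2) - (|X x - v x| ^ 2)| ∂μ) atTop (𝓝 0) := by
  have hv := huv.aestronglyMeasurable hu
  have hdiff (n : ℕ) : ∀ᵐ x ∂μ, |u n x - v x| ≤ C + K := by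
    filter_upwards [huC n, hvK] with x hu hv
    exact (abs_sub _ _).trans (add_le_add hu hv)
  have herr (n : ℕ) : ∀ᵐ x ∂μ, |(|X x - u n x| ^ 2) - (|X x - v x| ^ 2)|
      ≤ (3 * K + C) * |u n x - v x| := by
    filter_upwards [hXK, huC n, hvK] with x hX hu hv
    refine (abs_sq_abs_sub_sub_sq_abs_sub_le _ _ _).trans
      (mul_le_mul_of_nonneg_right ?_ (abs_nonneg _))
    linarith [abs_sub (X x) (u n x), abs_sub (X x) (v x)]
  refine squeeze_zero (fun _ => integral_nonneg fun _ => abs_nonneg _) (fun n => ?_)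
    (by simpa using (huv.tendsto_integral_abs_sub hu hdiff).const_mul (3 * K + C))
  rw [← integral_const_mul]
  refine integral_mono_of_nonneg (ae_of_all _ fun _ => abs_nonneg _)
    ((Integrable.of_bound ((hu n).sub hv).norm (C + K) ?_).const_mul _) (herr n)
  simpa only [Real.norm_eq_abs, abs_abs, Pi.sub_apply] using hdiff n

end MeasureTheory

namespace Ergodic

variable {α : Type*} [MeasurableSpace α] {μ : Measure α} [IsProbabilityMeasure μ]
  {f : α → α} {g : α → ℝ}

theorem exists_tendsto_integral_abs_birkhoffAverage_sub (hf : Ergodic f μ) (hg : MemLp g 2 μ) :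
    ∃ c, Tendsto (fun n => ∫ x, |birkhoffAverage ℝ f g n x - c| ∂μ) atTop (𝓝 0) := by
  set U : Lp ℝ 2 μ →L[ℝ] Lp ℝ 2 μ :=
    (Lp.compMeasurePreservingₗᵢ ℝ f hf.toMeasurePreserving).toContinuousLinearMap
  obtain ⟨y, hvN, hUy⟩ : ∃ y, Tendsto (birkhoffAverage ℝ U id · (hg.toLp g)) atTop (𝓝 y) ∧
      U y = y :=
    ⟨_, U.tendsto_birkhoffAverage_orthogonalProjection
      (LinearIsometry.norm_toContinuousLinearMap_le _) (hg.toLp g),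
      (Submodule.coe_mem _ : _ ∈ LinearMap.eqLocus _ _)⟩
  have hy_inv : (y : α → ℝ) ∘ f =ᵐ[μ] y :=
    (Lp.coeFn_compMeasurePreserving y hf.toMeasurePreserving).symm.trans (by
      rw [show Lp.compMeasurePreserving f hf.toMeasurePreserving y = y from hUy])
  obtain ⟨c, hc⟩ := hf.ae_eq_const_of_ae_eq_comp_ae (Lp.aestronglyMeasurable _) hy_inv
  have hcoe (n : ℕ) : ⇑(birkhoffAverage ℝ U id n (hg.toLp g) - y)
      =ᵐ[μ] fun x => birkhoffAverage ℝ f g n x - c := by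
    filter_upwards [Lp.coeFn_sub (birkhoffAverage ℝ U id n (hg.toLp g)) y,
      Lp.coeFn_smul (n : ℝ)⁻¹ (birkhoffSum U id n (hg.toLp g)),
      Lp.coeFn_birkhoffSum_compMeasurePreserving hf.toMeasurePreserving hg n, hc]
      with x hsub hsmul hsum hx
    simp only [birkhoffAverage] at hsub ⊢
    rw [hsub, Pi.sub_apply, hsmul, hx, ← hsum]
    rfl
  refine ⟨c, squeeze_zero (fun n => integral_nonneg fun x => abs_nonneg _) (fun n => ?_)
    (tendsto_iff_norm_sub_tendsto_zero.1 hvN)⟩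
  exact (integral_congr_ae ((hcoe n).fun_comp abs)).symm.trans_le
    (Lp.integral_abs_le_norm_two _)

theorem tendsto_integral_abs_birkhoffAverage_sub (hf : Ergodic f μ) (hg : MemLp g 2 μ) :
    Tendsto (fun n => ∫ x, |birkhoffAverage ℝ f g n x - ∫ y, g y ∂μ| ∂μ) atTop (𝓝 0) := by
  obtain ⟨c, hc⟩ := hf.exists_tendsto_integral_abs_birkhoffAverage_sub hg
  have hgi : Integrable g μ := hg.integrable one_le_two
  have hmean_lim : Tendsto (fun n => ∫ x, birkhoffAverage ℝ f g n x ∂μ) atTop (𝓝 c) := by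
    refine tendsto_iff_norm_sub_tendsto_zero.2 <| squeeze_zero (fun _ => norm_nonneg _)
      (fun n => ?_) hc
    have hint : Integrable (birkhoffAverage ℝ f g n) μ :=
      (hf.toMeasurePreserving.integrable_birkhoffSum hgi n).smul (n : ℝ)⁻¹
    calc ‖∫ x, birkhoffAverage ℝ f g n x ∂μ - c‖
        = ‖∫ x, (birkhoffAverage ℝ f g n x - c) ∂μ‖ := by
          rw [integral_sub hint (integrable_const c), integral_const, probReal_univ, one_smul]
      _ ≤ ∫ x, |birkhoffAverage ℝ f g n x - c| ∂μ := norm_integral_le_integral_norm _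
  have hmean_eq : ∀ᶠ n in atTop, ∫ y, g y ∂μ = ∫ x, birkhoffAverage ℝ f g n x ∂μ :=
    (eventually_ne_atTop 0).mono fun n hn =>
      (hf.toMeasurePreserving.integral_birkhoffAverage hgi hn).symm
  rwa [← tendsto_nhds_unique hmean_lim (tendsto_const_nhds.congr' hmean_eq)]

theorem tendsto_integral_abs_average_comp_iterate_sub (hf : Ergodic f μ) {h : ℕ → α → ℝ}
    (hh : ∀ t, Integrable (h t) μ) (hg : MemLp g 2 μ)
    (hhg : Tendsto (fun t => ∫ x, |h t x - g x| ∂μ) atTop (𝓝 0)) :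
    Tendsto (fun n : ℕ => ∫ x, |(n : ℝ)⁻¹ * ∑ t ∈ range n, h t (f^[t] x) - ∫ y, g y ∂μ| ∂μ)
      atTop (𝓝 0) := by
  have hmp := hf.toMeasurePreserving
  have hgi : Integrable g μ := hg.integrable one_le_two
  set m := ∫ y, g y ∂μ
  have hdiff (t : ℕ) : Integrable (fun x => |h t (f^[t] x) - g (f^[t] x)|) μ :=
    (hmp.iterate t).integrable_comp_of_integrable ((hh t).sub hgi).abs
  have hpointwise (n : ℕ) (x : α) : |(n : ℝ)⁻¹ * ∑ t ∈ range n, h t (f^[t] x) - m|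
      ≤ (n : ℝ)⁻¹ * ∑ t ∈ range n, |h t (f^[t] x) - g (f^[t] x)|
        + |birkhoffAverage ℝ f g n x - m| := by
    have hsplit : (n : ℝ)⁻¹ * ∑ t ∈ range n, h t (f^[t] x) - m
        = (n : ℝ)⁻¹ * ∑ t ∈ range n, (h t (f^[t] x) - g (f^[t] x))
          + (birkhoffAverage ℝ f g n x - m) := by
      simp only [birkhoffAverage, birkhoffSum, smul_eq_mul, sum_sub_distrib]
      ring
    rw [hsplit]
    refine (abs_add_le _ _).trans (add_le_add_left ?_ _)
    rw [abs_mul, abs_inv, Nat.abs_cast]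
    exact mul_le_mul_of_nonneg_left (abs_sum_le_sum_abs _ _) (by positivity)
  have hbound (n : ℕ) : ∫ x, |(n : ℝ)⁻¹ * ∑ t ∈ range n, h t (f^[t] x) - m| ∂μ
      ≤ (n : ℝ)⁻¹ * ∑ t ∈ range n, ∫ x, |h t x - g x| ∂μ
        + ∫ x, |birkhoffAverage ℝ f g n x - m| ∂μ := by
    have hsum_int : Integrable (fun x => ∑ t ∈ range n, |h t (f^[t] x) - g (f^[t] x)|) μ :=
      integrable_finsetSum _ fun t _ => hdiff t
    have havg_int : Integrable (fun x => |birkhoffAverage ℝ f g n x - m|) μ :=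
      (((hmp.integrable_birkhoffSum hgi n).smul (n : ℝ)⁻¹).sub (integrable_const m)).abs
    calc _ ≤ ∫ x, ((n : ℝ)⁻¹ * ∑ t ∈ range n, |h t (f^[t] x) - g (f^[t] x)|
          + |birkhoffAverage ℝ f g n x - m|) ∂μ :=
          integral_mono_of_nonneg (ae_of_all _ fun _ => abs_nonneg _)
            ((hsum_int.const_mul _).add havg_int) (ae_of_all _ (hpointwise n))
      _ = _ := by
          rw [integral_add (hsum_int.const_mul _) havg_int, integral_const_mul,
            integral_finsetSum _ fun t _ => hdiff t]
          congr 3 with t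
          exact (hmp.iterate t).integral_comp_of_aestronglyMeasurable (f := f^[t])
            (g := fun x => |h t x - g x|) ((hh t).sub hgi).abs.aestronglyMeasurable
  refine squeeze_zero (fun _ => integral_nonneg fun _ => abs_nonneg _) hbound ?_
  simpa using hhg.cesaro.add (hf.tendsto_integral_abs_birkhoffAverage_sub hg)

end Ergodic

namespace Stmt18

theorem shift_iterate_apply (t : ℕ) (ω : ℤ → ℝ) (n : ℤ) : shift^[t] ω n = ω (n + t) := by
  induction t generalizing ω n with
  | zero => simp
  | succ k ih => rw [Function.iterate_succ_apply, ih, shift, Nat.cast_succ, add_assoc]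

theorem recentSA_le (t : ℕ) : recentSA t ≤ MeasurableSpace.pi :=
  Measurable.comap_le (measurable_pi_lambda _ fun _ => measurable_pi_apply _)

end Stmt18

/-- Regression: for a bounded stationary ergodic real process, if the predictors
`X̂_{-t}` (σ(X^{-t})-measurable, uniformly bounded) converge in probability to
`X̂ = E{X₀|X^-}`, then `|X₀ - X̂_{-t}|² → |X₀ - X̂|²` in `L¹` and the on-line average
squared errors converge: `(1/n) ∑_{t<n} |X_t - X̂_t|² → E|X₀ - X̂|²` in `L¹`, where
`X̂_t(ω) = X̂_{-t}(T^t ω)`. -/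
theorem stmt_18 (μ : Measure (ℤ → ℝ)) [IsProbabilityMeasure μ]
    (herg : Ergodic shift μ)
    (K : ℝ) (hK : ∀ᵐ ω ∂μ, ∀ t : ℤ, |ω t| ≤ K)
    (Xhm : ℕ → (ℤ → ℝ) → ℝ)
    (hmeas : ∀ t, StronglyMeasurable[recentSA t] (Xhm t))
    (C : ℝ) (hbdd : ∀ t, ∀ᵐ ω ∂μ, |Xhm t ω| ≤ C)
    (hprob : TendstoInMeasure μ Xhm atTop (Xopt μ)) :
    Tendsto (fun t : ℕ =>
        ∫ ω, |(|ω 0 - Xhm t ω| ^ 2) - (|ω 0 - Xopt μ ω| ^ 2)| ∂μ) atTop (nhds 0) ∧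
    Tendsto (fun n : ℕ =>
        ∫ ω, |(1 / (n : ℝ)) * (∑ t ∈ Finset.range n, |ω (t : ℤ) - Xhm t (shift^[t] ω)| ^ 2)
            - ∫ ω', |ω' 0 - Xopt μ ω'| ^ 2 ∂μ| ∂μ)
      atTop (nhds 0) := by
  have hK0 : ∀ᵐ ω ∂μ, |ω 0| ≤ K := hK.mono fun ω h => h 0
  have hXopt : ∀ᵐ ω ∂μ, |Xopt μ ω| ≤ K := ae_bdd_abs_condExp_of_ae_bdd_abs hK0
  have hXhm_meas (t : ℕ) : AEStronglyMeasurable (Xhm t) μ :=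
    ((hmeas t).mono (recentSA_le t)).aestronglyMeasurable
  have hXopt_meas := hprob.aestronglyMeasurable hXhm_meas
  have hX0_meas : AEStronglyMeasurable (fun ω : ℤ → ℝ => ω 0) μ :=
    (measurable_pi_apply 0).aestronglyMeasurable
  have hL1 := hprob.tendsto_integral_abs_sq_err_sub hXhm_meas hK0 hbdd hXopt
  refine ⟨hL1, ?_⟩
  have hpred_int (t : ℕ) : Integrable (fun ω => |ω 0 - Xhm t ω| ^ 2) μ :=
    memLp_one_iff_integrable.1 <|
      memLp_abs_sub_sq_of_abs_le hX0_meas (hXhm_meas t) hK0 (hbdd t) 1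
  have hopt_memLp : MemLp (fun ω => |ω 0 - Xopt μ ω| ^ 2) 2 μ :=
    memLp_abs_sub_sq_of_abs_le hX0_meas hXopt_meas hK0 hXopt 2
  simpa [shift_iterate_apply, one_div] using
    herg.tendsto_integral_abs_average_comp_iterate_sub hpred_int hopt_memLp hL1
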